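/- As λ → −∞, λ − Λ_r(λ) → −ln(q + p_0), and λ − Λ_l(λ) → −ln(1 − q). -/

import Mathlib

open MeasureTheory ProbabilityTheory Filter Topology

/-- `φ(s) = q + ∑_{n≥0} p_n s^{n+1}`. -/
noncomputable def phi (q : ℝ) (p : ℕ → ℝ) (s : ℝ) : ℝ :=
  q + ∑' n : ℕ, p n * s ^ (n + 1)

/-- `φ'(s) = ∑_{n≥0} (n+1) p_n s^n`. -/
noncomputable def phiDeriv (p : ℕ → ℝ) (s : ℝ) : ℝ :=
  ∑' n : ℕ, (n + 1 : ℝ) * p n * s ^ n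

/-- `h s` is the minimal nonnegative solution `x ∈ [0,1]` of `x = s * φ x`, for every
`s ∈ [0,1]`. -/
def IsMinimalSolution (φ : ℝ → ℝ) (h : ℝ → ℝ) : Prop :=
  ∀ s ∈ Set.Icc (0 : ℝ) 1, h s ∈ Set.Icc (0 : ℝ) 1 ∧ h s = s * φ (h s) ∧
    ∀ y ∈ Set.Icc (0 : ℝ) 1, y = s * φ y → h s ≤ y

/-- `Λ_r(λ) = ln(1 + q e^λ − q e^λ / h(e^λ))` for `λ < 0`, and `Λ_r(0) = 0`
(also on `λ > 0`, which is irrelevant). -/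
noncomputable def LambdaR (q : ℝ) (h : ℝ → ℝ) (l : ℝ) : ℝ :=
  if l < 0 then Real.log (1 + q * Real.exp l - q * Real.exp l / h (Real.exp l)) else 0

/-- `Λ_r*(x) = sup_{λ ≤ 0} (xλ − Λ_r(λ))`, as an extended real number. -/
noncomputable def LambdaRStar (q : ℝ) (h : ℝ → ℝ) (x : ℝ) : EReal :=
  ⨆ l ∈ Set.Iic (0 : ℝ), ((x * l - LambdaR q h l : ℝ) : EReal)

/-- `Λ_l(λ) = λ + ln((1 − φ(h(e^λ)))/(1 − h(e^λ)))` for `λ < 0`, and `Λ_l(0) = 0`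
(also on `λ > 0`, which is irrelevant). -/
noncomputable def LambdaL (φ : ℝ → ℝ) (h : ℝ → ℝ) (l : ℝ) : ℝ :=
  if l < 0 then l + Real.log ((1 - φ (h (Real.exp l))) / (1 - h (Real.exp l))) else 0

/-- `Λ_l*(x) = sup_{λ ≤ 0} (xλ − Λ_l(λ))`, as an extended real number. -/
noncomputable def LambdaLStar (φ : ℝ → ℝ) (h : ℝ → ℝ) (x : ℝ) : EReal :=
  ⨆ l ∈ Set.Iic (0 : ℝ), ((x * l - LambdaL φ h l : ℝ) : EReal)

/-!
Write `φ(x) = q + x T(x)` with `T(x) = ∑ p_n x^n`. For `s = e^λ` and `x = h(s)` the fixed-point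
equation `x = s φ(x)` gives `1 + q s - q s / x = s (q + T(x))`, so `λ - Λ_r(λ) = -ln(q + T(x))`.
Since `x = s φ(x) ≤ s`, `x → 0` as `λ → -∞`, and continuity of `T` and `φ` on `[0,1]`
(Weierstrass M-test) yields the limits `-ln(q + T(0))` and `-ln((1 - φ(0))/1)`.
-/

open Set

noncomputable def genFun (p : ℕ → ℝ) (x : ℝ) : ℝ :=
  ∑' n : ℕ, p n * x ^ n

section GeneratingFunction

variable {p : ℕ → ℝ}

theorem phi_eq_add_mul_genFun (q : ℝ) (p : ℕ → ℝ) (x : ℝ) :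
    phi q p x = q + x * genFun p x := by
  rw [phi, genFun, ← tsum_mul_left]
  congr 1
  exact tsum_congr fun n => by ring

theorem genFun_zero (p : ℕ → ℝ) : genFun p 0 = p 0 := by
  rw [genFun, tsum_eq_single 0 fun n hn => by simp [hn]]
  simp

theorem genFun_nonneg (hp : ∀ n, 0 ≤ p n) {x : ℝ} (hx : 0 ≤ x) : 0 ≤ genFun p x :=
  tsum_nonneg fun n => mul_nonneg (hp n) (pow_nonneg hx n)

theorem norm_mul_pow_le {x : ℝ} (hx : x ∈ Icc (0 : ℝ) 1) (n : ℕ) :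
    ‖p n * x ^ n‖ ≤ ‖p n‖ := by
  rw [norm_mul, norm_pow]
  exact mul_le_of_le_one_right (norm_nonneg _)
    (pow_le_one₀ (norm_nonneg x) (by rw [Real.norm_of_nonneg hx.1]; exact hx.2))

theorem continuousOn_genFun (hp : Summable fun n => ‖p n‖) : ContinuousOn (genFun p) (Icc 0 1) :=
  continuousOn_tsum (fun n => (continuous_const.mul (continuous_pow n)).continuousOn) hp
    fun n _ hx => norm_mul_pow_le hx n

theorem genFun_le_tsum (hp : ∀ n, 0 ≤ p n) (hpsum : Summable p) {x : ℝ}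
    (hx : x ∈ Icc (0 : ℝ) 1) : genFun p x ≤ ∑' n, p n := by
  have hle : ∀ n, p n * x ^ n ≤ p n := fun n =>
    mul_le_of_le_one_right (hp n) (pow_le_one₀ hx.1 hx.2)
  exact (hpsum.of_nonneg_of_le (fun n => mul_nonneg (hp n) (pow_nonneg hx.1 n)) hle).tsum_le_tsum
    hle hpsum

end GeneratingFunction

section Phi

variable {q : ℝ} {p : ℕ → ℝ}

theorem phi_zero : phi q p 0 = q := by
  simp [phi_eq_add_mul_genFun]

theorem continuousOn_phi (hp : Summable fun n => ‖p n‖) : ContinuousOn (phi q p) (Icc 0 1) := by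
  simp_rw [funext (phi_eq_add_mul_genFun q p)]
  exact continuousOn_const.add (continuousOn_id.mul (continuousOn_genFun hp))

theorem le_phi (hp : ∀ n, 0 ≤ p n) {x : ℝ} (hx : 0 ≤ x) : q ≤ phi q p x := by
  rw [phi_eq_add_mul_genFun]
  exact le_add_of_nonneg_right (mul_nonneg hx (genFun_nonneg hp hx))

theorem phi_le_one (hp : ∀ n, 0 ≤ p n) (hpsum : Summable p) (htotal : q + ∑' n, p n = 1)
    {x : ℝ} (hx : x ∈ Icc (0 : ℝ) 1) : phi q p x ≤ 1 := by
  rw [phi_eq_add_mul_genFun]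
  have := mul_le_of_le_one_left (genFun_nonneg hp hx.1) hx.2
  linarith [genFun_le_tsum hp hpsum hx]

end Phi

namespace IsMinimalSolution

variable {φ h : ℝ → ℝ}

theorem pos (hmin : IsMinimalSolution φ h) (hφ : ∀ x ∈ Icc (0 : ℝ) 1, 0 < φ x) {s : ℝ}
    (hs : s ∈ Icc (0 : ℝ) 1) (hs0 : 0 < s) : 0 < h s := by
  obtain ⟨hmem, heq, -⟩ := hmin s hs
  rw [heq]
  exact mul_pos hs0 (hφ _ hmem)

theorem le_self (hmin : IsMinimalSolution φ h) (hφ : ∀ x ∈ Icc (0 : ℝ) 1, φ x ≤ 1) {s : ℝ}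
    (hs : s ∈ Icc (0 : ℝ) 1) : h s ≤ s := by
  obtain ⟨hmem, heq, -⟩ := hmin s hs
  rw [heq]
  exact mul_le_of_le_one_right hs.1 (hφ _ hmem)

theorem tendsto_comp_exp_atBot (hmin : IsMinimalSolution φ h)
    (hφ : ∀ x ∈ Icc (0 : ℝ) 1, φ x ≤ 1) :
    Tendsto (fun l => h (Real.exp l)) atBot (𝓝[Icc 0 1] 0) := by
  have hexp : ∀ᶠ l in atBot, Real.exp l ∈ Icc (0 : ℝ) 1 := by
    filter_upwards [eventually_le_atBot 0] with l hl
    exact ⟨(Real.exp_pos l).le, Real.exp_le_one_iff.2 hl⟩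
  refine tendsto_nhdsWithin_iff.2 ⟨?_, hexp.mono fun l hl => (hmin _ hl).1⟩
  refine tendsto_of_tendsto_of_tendsto_of_le_of_le' tendsto_const_nhds Real.tendsto_exp_atBot
    (hexp.mono fun l hl => (hmin _ hl).1.1) (hexp.mono fun l hl => hmin.le_self hφ hl)

end IsMinimalSolution

theorem sub_lambdaR_eq {q : ℝ} {p : ℕ → ℝ} (hq : 0 < q) (hp : ∀ n, 0 ≤ p n) {h : ℝ → ℝ}
    (hmin : IsMinimalSolution (phi q p) h) {l : ℝ} (hl : l < 0) :
    l - LambdaR q h l = -Real.log (q + genFun p (h (Real.exp l))) := by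
  have hs : Real.exp l ∈ Icc (0 : ℝ) 1 := ⟨(Real.exp_pos l).le, Real.exp_le_one_iff.2 hl.le⟩
  obtain ⟨hmem, heq, -⟩ := hmin _ hs
  have hx : 0 < h (Real.exp l) :=
    hmin.pos (fun x hx => hq.trans_le (le_phi hp hx.1)) hs (Real.exp_pos l)
  have hqt : 0 < q + genFun p (h (Real.exp l)) := by
    linarith [genFun_nonneg hp hmem.1]
  rw [phi_eq_add_mul_genFun] at heq
  have hident : 1 + q * Real.exp l - q * Real.exp l / h (Real.exp l)
      = Real.exp l * (q + genFun p (h (Real.exp l))) := by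
    field_simp
    linear_combination heq
  rw [LambdaR, if_pos hl, hident, Real.log_mul (Real.exp_pos l).ne' hqt.ne', Real.log_exp]
  ring

theorem lambda_shift_limits_general
    (q : ℝ) (p : ℕ → ℝ) (hq : 0 < q) (hp : ∀ n, 0 ≤ p n)
    (hpsum : Summable p) (htotal : q + ∑' n : ℕ, p n = 1)
    (hcrit : ∑' n : ℕ, (n + 1 : ℝ) * p n = 1)
    (h : ℝ → ℝ) (hmin : IsMinimalSolution (phi q p) h)
:
    Tendsto (fun l => l - LambdaR q h l) atBot (𝓝 (-Real.log (q + p 0))) ∧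
    Tendsto (fun l => l - LambdaL (phi q p) h l) atBot (𝓝 (-Real.log (1 - q))) := by
  have hq1 : q < 1 := by
    by_contra! hq1
    have hp_eq : ∀ n, p n = 0 := fun n =>
      le_antisymm (by linarith [hpsum.le_tsum n fun m _ => hp m]) (hp n)
    simp [hp_eq] at hcrit
  have hpnorm : Summable fun n => ‖p n‖ := hpsum.norm
  have hx := hmin.tendsto_comp_exp_atBot fun x hx => phi_le_one hp hpsum htotal hx
  have hx₀ : Tendsto (fun l => h (Real.exp l)) atBot (𝓝 0) := (tendsto_nhdsWithin_iff.1 hx).1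
  have hzero : (0 : ℝ) ∈ Icc 0 1 := ⟨le_rfl, zero_le_one⟩
  have hT : Tendsto (fun l => genFun p (h (Real.exp l))) atBot (𝓝 (p 0)) := by
    have := ((continuousOn_genFun hpnorm).continuousWithinAt hzero).tendsto.comp hx
    rwa [genFun_zero] at this
  have hφ : Tendsto (fun l => phi q p (h (Real.exp l))) atBot (𝓝 q) := by
    have := ((continuousOn_phi (q := q) hpnorm).continuousWithinAt hzero).tendsto.comp hx
    rwa [phi_zero] at this
  constructor
  · refine ((Real.continuousAt_log (by linarith [hp 0])).tendsto.comp
      (hT.const_add q)).neg.congr' ?_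
    filter_upwards [eventually_lt_atBot 0] with l hl using (sub_lambdaR_eq hq hp hmin hl).symm
  · have hratio := (hφ.const_sub 1).div (hx₀.const_sub 1) (by norm_num)
    rw [sub_zero, div_one] at hratio
    refine ((Real.continuousAt_log (by linarith)).tendsto.comp hratio).neg.congr' ?_
    filter_upwards [eventually_lt_atBot 0] with l hl
    simp only [LambdaL, if_pos hl, Function.comp_apply, Pi.div_apply]
    ring

/-- Lemma 6: `λ − Λ_r(λ) → −ln(q + p₀)` and `λ − Λ_l(λ) → −ln(1 − q)` as `λ → −∞`. -/
theorem lambda_shift_limits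
    (q : ℝ) (p : ℕ → ℝ) (hq : 0 < q) (hp : ∀ n, 0 ≤ p n)
    (hpsum : Summable p) (htotal : q + ∑' n : ℕ, p n = 1) (hp0 : p 0 < 1)
    (hmoment : Summable (fun n : ℕ => (n + 1 : ℝ) * p n))
    (hcrit : ∑' n : ℕ, (n + 1 : ℝ) * p n = 1)
    (h : ℝ → ℝ) (hmin : IsMinimalSolution (phi q p) h)
:
    Tendsto (fun l => l - LambdaR q h l) atBot (𝓝 (-Real.log (q + p 0))) ∧
    Tendsto (fun l => l - LambdaL (phi q p) h l) atBot (𝓝 (-Real.log (1 - q))) :=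
  lambda_shift_limits_general q p hq hp hpsum htotal hcrit h hmin
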